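/- Let R be a commutative Noetherian ring. The following are equivalent: (1) R has an Artinian quotient ring Q = C⁻¹R; (2) C' ⊆ C; (3) the associated primes of the zero ideal (0) are exactly the minimal primes of R. -/

import Mathlib

/-!
Over a Noetherian ring `R` the zero divisors are the union of the finitely many associated
primes, while the elements that become zero divisors modulo the nilradical are the union of the
minimal primes, and every minimal prime is associated. Each of the three conditions amounts to
the first union being contained in the second: for `C' ⊆ C` directly, for the equality of prime
sets because, by prime avoidance, a prime inside a union of minimal primes is minimal, and for
`Q` because `Q` is Noetherian, hence Artinian iff zero-dimensional, and its primes are those of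
`R` consisting of zero divisors.
-/

section

variable {R : Type*} [CommRing R]

theorem minimalPrimes_subset_associatedPrimes [IsNoetherianRing R] :
    minimalPrimes R ⊆ associatedPrimes R R := by
  simpa [Module.annihilator_eq_bot.mpr inferInstance] using
    Module.associatedPrimes.minimalPrimes_annihilator_subset_associatedPrimes R R

theorem Ideal.IsPrime.mem_minimalPrimes_of_le {p q : Ideal R} (hp : p.IsPrime)
    (hq : q ∈ minimalPrimes R) (hpq : p ≤ q) : p ∈ minimalPrimes R :=
  le_antisymm hpq (hq.2 ⟨hp, bot_le⟩ hpq) ▸ hq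

theorem Ideal.IsPrime.mem_minimalPrimes_of_subset_biUnion [IsNoetherianRing R] {p : Ideal R}
    (hp : p.IsPrime) (h : (p : Set R) ⊆ ⋃ q ∈ minimalPrimes R, (q : Set R)) :
    p ∈ minimalPrimes R := by
  obtain ⟨q, hq, hpq⟩ := (subset_union_prime_finite (minimalPrimes.finite_of_isNoetherianRing R)
    (f := id) ⊥ ⊥ (fun q hq _ _ ↦ hq.1.1)).mp h
  exact hp.mem_minimalPrimes_of_le hq hpq

theorem mk_mem_nonZeroDivisors_quotient_nilradical_iff {c : R} :
    Ideal.Quotient.mk (nilradical R) c ∈ nonZeroDivisors (R ⧸ nilradical R) ↔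
      c ∉ ⋃ q ∈ minimalPrimes R, (q : Set R) := by
  simp only [Set.mem_iUnion, SetLike.mem_coe, not_exists]
  constructor
  · intro hc q hq hcq
    have hq' : q ∈ (nilradical R).minimalPrimes := by
      rwa [nilradical, Ideal.radical_minimalPrimes]
    obtain ⟨y, hy, hcy⟩ := Ideal.exists_mul_mem_of_mem_minimalPrimes hq' hcq
    refine hy (Ideal.Quotient.eq_zero_iff_mem.mp (mem_nonZeroDivisors_iff_left.mp hc _ ?_))
    rwa [← map_mul, Ideal.Quotient.eq_zero_iff_mem]
  · intro hc
    refine mem_nonZeroDivisors_iff_left.mpr fun x hx ↦ ?_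
    obtain ⟨x, rfl⟩ := Ideal.Quotient.mk_surjective x
    rw [← map_mul, Ideal.Quotient.eq_zero_iff_mem] at hx
    rw [Ideal.Quotient.eq_zero_iff_mem, nilradical, ← Ideal.sInf_minimalPrimes]
    refine Ideal.mem_sInf.mpr fun {q} hq ↦ ?_
    have := hq.isPrime
    exact (this.mem_or_mem (nilradical_le_prime q hx)).resolve_left (hc q hq)

theorem forall_mem_nonZeroDivisors_of_mk_mem_iff :
    (∀ c : R, Ideal.Quotient.mk (nilradical R) c ∈ nonZeroDivisors (R ⧸ nilradical R) →
        c ∈ nonZeroDivisors R) ↔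
      (nonZeroDivisors R : Set R)ᶜ ⊆ ⋃ q ∈ minimalPrimes R, (q : Set R) := by
  simp only [mk_mem_nonZeroDivisors_quotient_nilradical_iff]
  exact ⟨fun h c ↦ not_imp_comm.mp (h c), fun h c ↦ not_imp_comm.mp (@h c)⟩

theorem Ring.krullDimLE_zero_iff_forall_isPrime_mem_minimalPrimes :
    Ring.KrullDimLE 0 R ↔ ∀ P : Ideal R, P.IsPrime → P ∈ minimalPrimes R := by
  refine ⟨fun _ P hP ↦ Ideal.mem_minimalPrimes_iff_isPrime.mpr hP, fun h ↦ ?_⟩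
  refine Ring.krullDimLE_zero_iff.mpr fun P hP ↦ ?_
  obtain ⟨M, hM, hPM⟩ := P.exists_le_maximal hP.ne_top
  rwa [le_antisymm hPM ((h M hM.isPrime).2 ⟨hP, bot_le⟩ hPM)]

theorem IsLocalization.krullDimLE_zero_iff {S : Submonoid R} (hS : S ≤ nonZeroDivisors R)
    (A : Type*) [CommRing A] [Algebra R A] [IsLocalization S A] :
    Ring.KrullDimLE 0 A ↔
      ∀ p : Ideal R, p.IsPrime → Disjoint (S : Set R) p → p ∈ minimalPrimes R := by
  have hmin : minimalPrimes R = Ideal.under R '' minimalPrimes A := by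
    simpa [Ideal.comap_bot_of_injective _ (IsLocalization.injective A hS)] using
      IsLocalization.minimalPrimes_comap S A ⊥
  rw [Ring.krullDimLE_zero_iff_forall_isPrime_mem_minimalPrimes, hmin]
  constructor
  · intro h p hp hdisj
    rw [← IsLocalization.under_map_of_isPrime_disjoint S A hp hdisj]
    exact Set.mem_image_of_mem _ (h _ (IsLocalization.isPrime_of_isPrime_disjoint S A p hp hdisj))
  · intro h P hP
    obtain ⟨hPp, hPdisj⟩ := (IsLocalization.isPrime_iff_isPrime_disjoint S A P).mp hP
    obtain ⟨P', hP', hP'P⟩ := h _ hPp hPdisj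
    rwa [← IsLocalization.map_under S A P, ← hP'P, IsLocalization.map_under S A]

variable [IsNoetherianRing R]

theorem forall_disjoint_nonZeroDivisors_mem_minimalPrimes_iff :
    (∀ p : Ideal R, p.IsPrime → Disjoint (nonZeroDivisors R : Set R) p →
        p ∈ minimalPrimes R) ↔
      (nonZeroDivisors R : Set R)ᶜ ⊆ ⋃ q ∈ minimalPrimes R, (q : Set R) := by
  have hZ := biUnion_associatedPrimes_eq_compl_nonZeroDivisors R
  constructor
  · refine fun h ↦ hZ ▸ Set.iUnion₂_subset fun p hp ↦ ?_
    refine Set.subset_biUnion_of_mem (u := fun q : Ideal R ↦ (q : Set R)) (h p hp.1 ?_)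
    exact Set.subset_compl_iff_disjoint_left.mp (hZ ▸ Set.subset_biUnion_of_mem hp)
  · intro h p hp hdisj
    exact hp.mem_minimalPrimes_of_subset_biUnion
      ((Set.subset_compl_iff_disjoint_left.mpr hdisj).trans h)

theorem associatedPrimes_eq_minimalPrimes_iff :
    associatedPrimes R R = minimalPrimes R ↔
      (nonZeroDivisors R : Set R)ᶜ ⊆ ⋃ q ∈ minimalPrimes R, (q : Set R) := by
  rw [← biUnion_associatedPrimes_eq_compl_nonZeroDivisors]
  refine ⟨fun h ↦ h ▸ subset_rfl, fun h ↦ ?_⟩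
  refine subset_antisymm (fun p hp ↦ ?_) minimalPrimes_subset_associatedPrimes
  exact hp.1.mem_minimalPrimes_of_subset_biUnion ((Set.subset_biUnion_of_mem hp).trans h)

end

/-- **Corollary (`CA2Sep12`).** Let `R` be a commutative Noetherian ring, `n = nilradical R`
its prime radical, `R̄ = R/n`, `C` the set of regular elements (non-zero-divisors) of `R` and
`C' = {c : R | c + n is regular in R̄}`.  The following are equivalent:
(1) `R` has an Artinian quotient ring `Q = C⁻¹R` (encoded: the localization of `R` at its
non-zero-divisors is an Artinian ring);
(2) `C' ⊆ C`;
(3) the associated primes of `(0)` are exactly the minimal primes of `R`. -/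
theorem commutative_noetherian_artinian_quotient_ring_criterion
    (R : Type u) [CommRing R] [IsNoetherianRing R] :
    (IsArtinianRing (Localization (nonZeroDivisors R)) ↔
      ∀ c : R, Ideal.Quotient.mk (nilradical R) c ∈ nonZeroDivisors (R ⧸ nilradical R) →
        c ∈ nonZeroDivisors R) ∧
    ((∀ c : R, Ideal.Quotient.mk (nilradical R) c ∈ nonZeroDivisors (R ⧸ nilradical R) →
        c ∈ nonZeroDivisors R) ↔
      associatedPrimes R R = minimalPrimes R) := by
  have h1 : IsArtinianRing (Localization (nonZeroDivisors R)) ↔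
      (nonZeroDivisors R : Set R)ᶜ ⊆ ⋃ q ∈ minimalPrimes R, (q : Set R) := by
    rw [isArtinianRing_iff_krullDimLE_zero,
      IsLocalization.krullDimLE_zero_iff (le_refl (nonZeroDivisors R)),
      forall_disjoint_nonZeroDivisors_mem_minimalPrimes_iff]
  exact ⟨h1.trans forall_mem_nonZeroDivisors_of_mk_mem_iff.symm,
    forall_mem_nonZeroDivisors_of_mk_mem_iff.trans associatedPrimes_eq_minimalPrimes_iff.symm⟩
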